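/- Let f = (f_0, …, f_n) : Δ → ℝ^{n+1} be uniformly continuous, satisfy the Walras law, and be sequentially locally non-constant. Then the map φ : Δ → Δ defined by φ_i(p) = (p_i + max(f_i(p), 0)) / (1 + Σ_{j=0}^n max(f_j(p), 0)) is sequentially locally non-constant as a self-map of Δ: there exists ε̄ > 0 such that for each ε with 0 < ε ≤ ε̄ there exist finitely many nonempty closed subsets H_1, …, H_m of Δ, each of diameter at most ε, covering Δ, such that for each i and all sequences (p_k), (q_k) in H_i, if |φ(p_k) − p_k| → 0 and |φ(q_k) − q_k| → 0, then |p_k − q_k| → 0. -/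

import Mathlib

/-!
Write `x⁺ = max x 0` and `S = Σ_j f_j(p)⁺`. Then `(1 + S)(φ_j(p) - p_j) = f_j(p)⁺ - p_j S`, and the
Walras law turns `Σ_j f_j(p) (f_j(p)⁺ - p_j S)` into `Σ_j (f_j(p)⁺)²`. Since `f` is bounded on the
compact simplex, `Σ_j (f_j(p)⁺)²` is at most a constant times `|φ(p) - p|`, so `|φ(p_k) - p_k| → 0`
forces `f_j(p_k)⁺ → 0` for every `j`, and any covering witnessing that `f` is sequentially locally
non-constant witnesses it for `φ` as well.
-/

open Filter Topology

noncomputable section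

/-- The ambient Euclidean space `ℝ^{n+1}`. -/
abbrev E (n : ℕ) := EuclideanSpace ℝ (Fin (n + 1))

/-- The standard `n`-dimensional simplex in `ℝ^{n+1}` with the Euclidean metric. -/
def simplexE (n : ℕ) : Set (E n) := {p | (∀ i, 0 ≤ p i) ∧ ∑ i, p i = 1}

/-- The excess demand function `f` is sequentially locally non-constant (in terms of
`max (f_j , 0) → 0`). -/
def SeqLocNonConstED (n : ℕ) (f : E n → E n) : Prop :=
  ∃ εbar > (0 : ℝ), ∀ ε : ℝ, 0 < ε → ε ≤ εbar →
    ∃ (m : ℕ) (H : Fin m → Set (E n)),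
      (∀ i, H i ⊆ simplexE n ∧ (H i).Nonempty ∧ IsClosed (H i) ∧ Metric.diam (H i) ≤ ε) ∧
      simplexE n = (⋃ i, H i) ∧
      ∀ i, ∀ p q : ℕ → E n, (∀ k, p k ∈ H i) → (∀ k, q k ∈ H i) →
        (∀ j, Tendsto (fun k => max (f (p k) j) 0) atTop (nhds 0)) →
        (∀ j, Tendsto (fun k => max (f (q k) j) 0) atTop (nhds 0)) →
        Tendsto (fun k => dist (p k) (q k)) atTop (nhds 0)

/-- The self-map `φ` is sequentially locally non-constant (in terms of
`|φ(p) − p| → 0`). -/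
def SeqLocNonConstFix (n : ℕ) (φ : E n → E n) : Prop :=
  ∃ εbar > (0 : ℝ), ∀ ε : ℝ, 0 < ε → ε ≤ εbar →
    ∃ (m : ℕ) (H : Fin m → Set (E n)),
      (∀ i, H i ⊆ simplexE n ∧ (H i).Nonempty ∧ IsClosed (H i) ∧ Metric.diam (H i) ≤ ε) ∧
      simplexE n = (⋃ i, H i) ∧
      ∀ i, ∀ p q : ℕ → E n, (∀ k, p k ∈ H i) → (∀ k, q k ∈ H i) →
        Tendsto (fun k => dist (φ (p k)) (p k)) atTop (nhds 0) →
        Tendsto (fun k => dist (φ (q k)) (q k)) atTop (nhds 0) →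
        Tendsto (fun k => dist (p k) (q k)) atTop (nhds 0)

open Finset

section PriceAdjustment

variable {ι : Type*} [Fintype ι]

def priceAdjustment (p x : ι → ℝ) (j : ι) : ℝ :=
  (p j + max (x j) 0) / (1 + ∑ i, max (x i) 0)

lemma sum_sq_max_zero_eq_of_walras {p x : ι → ℝ} (hw : ∑ i, p i * x i = 0) :
    ∑ j, max (x j) 0 ^ 2 =
      (1 + ∑ i, max (x i) 0) * ∑ j, x j * (priceAdjustment p x j - p j) := by
  set S := ∑ i, max (x i) 0
  have hS : 1 + S ≠ 0 := by
    have : 0 ≤ S := sum_nonneg fun i _ => le_max_right _ _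
    positivity
  have hstep : ∀ j, (1 + S) * (priceAdjustment p x j - p j) = max (x j) 0 - p j * S := by
    intro j
    rw [priceAdjustment, mul_sub, mul_div_cancel₀ _ hS]
    ring
  have hsq : ∀ j, x j * max (x j) 0 = max (x j) 0 ^ 2 := by
    intro j
    rcases le_total (x j) 0 with h | h
    · simp [max_eq_right h]
    · rw [max_eq_left h, sq]
  calc ∑ j, max (x j) 0 ^ 2 = ∑ j, x j * max (x j) 0 - S * ∑ j, p j * x j := by
        simp only [hw, mul_zero, sub_zero, hsq]
    _ = (1 + S) * ∑ j, x j * (priceAdjustment p x j - p j) := by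
        simp only [mul_sum, ← sum_sub_distrib, mul_left_comm (1 + S), hstep]
        exact sum_congr rfl fun j _ => by ring

lemma sum_sq_max_zero_le_of_walras {p x : ι → ℝ} {M d : ℝ} (hw : ∑ i, p i * x i = 0)
    (hx : ∀ j, |x j| ≤ M) (hd : ∀ j, |priceAdjustment p x j - p j| ≤ d) :
    ∑ j, max (x j) 0 ^ 2 ≤ (1 + Fintype.card ι * M) * (Fintype.card ι * (M * d)) := by
  have hS₀ : 0 ≤ ∑ i, max (x i) 0 := sum_nonneg fun i _ => le_max_right _ _
  have hS : ∑ i, max (x i) 0 ≤ Fintype.card ι * M := by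
    calc ∑ i, max (x i) 0 ≤ ∑ _i : ι, M :=
          sum_le_sum fun i _ => max_le ((le_abs_self _).trans (hx i)) ((abs_nonneg _).trans (hx i))
      _ = _ := by simp
  have hprod : ∀ j, |x j| * |priceAdjustment p x j - p j| ≤ M * d := fun j =>
    mul_le_mul (hx j) (hd j) (abs_nonneg _) ((abs_nonneg _).trans (hx j))
  have hMd : 0 ≤ Fintype.card ι * (M * d) := by
    have : 0 ≤ ∑ _j : ι, M * d :=
      sum_nonneg fun j _ => (mul_nonneg (abs_nonneg _) (abs_nonneg _)).trans (hprod j)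
    simpa using this
  have hT : ∑ j, x j * (priceAdjustment p x j - p j) ≤ Fintype.card ι * (M * d) := by
    calc ∑ j, x j * (priceAdjustment p x j - p j)
        ≤ ∑ j, |x j| * |priceAdjustment p x j - p j| :=
          sum_le_sum fun j _ => (le_abs_self _).trans (abs_mul _ _).le
      _ ≤ ∑ _j : ι, M * d := sum_le_sum fun j _ => hprod j
      _ = _ := by simp
  calc ∑ j, max (x j) 0 ^ 2
      = (1 + ∑ i, max (x i) 0) * ∑ j, x j * (priceAdjustment p x j - p j) :=
        sum_sq_max_zero_eq_of_walras hw
    _ ≤ (1 + ∑ i, max (x i) 0) * (Fintype.card ι * (M * d)) :=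
        mul_le_mul_of_nonneg_left hT (by positivity)
    _ ≤ (1 + Fintype.card ι * M) * (Fintype.card ι * (M * d)) :=
        mul_le_mul_of_nonneg_right (by linarith) hMd

end PriceAdjustment

lemma isCompact_simplexE (n : ℕ) : IsCompact (simplexE n) :=
  (EuclideanSpace.equiv (Fin (n + 1)) ℝ).toHomeomorph.isCompact_preimage.2
    (isCompact_stdSimplex ℝ _)

lemma tendsto_max_zero_of_tendsto_dist_self {n : ℕ} {f φ : E n → E n} {M : ℝ}
    (hφ : ∀ p i, φ p i = (p i + max (f p i) 0) / (1 + ∑ j, max (f p j) 0))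
    {p : ℕ → E n} (hM : ∀ k j, |f (p k) j| ≤ M) (hw : ∀ k, ∑ i, p k i * f (p k) i = 0)
    (h : Tendsto (fun k => dist (φ (p k)) (p k)) atTop (𝓝 0)) (j : Fin (n + 1)) :
    Tendsto (fun k => max (f (p k) j) 0) atTop (𝓝 0) := by
  set C := (1 + (n + 1 : ℝ) * M) * ((n + 1 : ℝ) * M)
  have hsq : ∀ k, max (f (p k) j) 0 ^ 2 ≤ C * dist (φ (p k)) (p k) := by
    intro k
    have hd : ∀ i, |priceAdjustment (p k) (f (p k)) i - p k i| ≤ dist (φ (p k)) (p k) := by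
      intro i
      rw [priceAdjustment, ← hφ]
      simpa only [Real.dist_eq] using PiLp.dist_apply_le (φ (p k)) (p k) i
    calc max (f (p k) j) 0 ^ 2 ≤ ∑ i, max (f (p k) i) 0 ^ 2 :=
          single_le_sum (f := fun i => max (f (p k) i) 0 ^ 2) (fun i _ => sq_nonneg _) (mem_univ j)
      _ ≤ _ := sum_sq_max_zero_le_of_walras (hw k) (hM k) hd
      _ = C * dist (φ (p k)) (p k) := by simp only [C, Fintype.card_fin]; push_cast; ring
  refine squeeze_zero (fun k => le_max_right _ _)
    (fun k => (le_abs_self _).trans (Real.abs_le_sqrt (hsq k))) ?_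
  simpa using (h.const_mul C).sqrt

lemma SeqLocNonConstED.seqLocNonConstFix {n : ℕ} {f φ : E n → E n} (hf : SeqLocNonConstED n f)
    (hφf : ∀ p : ℕ → E n, (∀ k, p k ∈ simplexE n) →
      Tendsto (fun k => dist (φ (p k)) (p k)) atTop (𝓝 0) →
      ∀ j, Tendsto (fun k => max (f (p k) j) 0) atTop (𝓝 0)) :
    SeqLocNonConstFix n φ := by
  obtain ⟨εbar, hεbar, hcovers⟩ := hf
  refine ⟨εbar, hεbar, fun ε hε hεε => ?_⟩
  obtain ⟨m, H, hH, hcover, hsep⟩ := hcovers ε hε hεε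
  refine ⟨m, H, hH, hcover, fun i p q hp hq hφp hφq => hsep i p q hp hq ?_ ?_⟩
  · exact hφf p (fun k => (hH i).1 (hp k)) hφp
  · exact hφf q (fun k => (hH i).1 (hq k)) hφq

/-- If `f` is uniformly continuous, satisfies the Walras law and is sequentially locally
non-constant, then `φ_i(p) = (p_i + max(f_i(p), 0)) / (1 + Σ_j max(f_j(p), 0))` is a
sequentially locally non-constant self-map of the simplex. -/
theorem phi_seqLocNonConst (n : ℕ) (f : E n → E n)
    (huc : UniformContinuousOn f (simplexE n))
    (hwalras : ∀ p ∈ simplexE n, ∑ i, p i * f p i = 0)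
    (hslnc : SeqLocNonConstED n f)
    (φ : E n → E n)
    (hφ : ∀ p i, φ p i = (p i + max (f p i) 0) / (1 + ∑ j, max (f p j) 0)) :
    SeqLocNonConstFix n φ := by
  obtain ⟨M, hM⟩ := (isCompact_simplexE n).exists_bound_of_continuousOn huc.continuousOn
  have hfM : ∀ p ∈ simplexE n, ∀ j, |f p j| ≤ M := fun p hp j =>
    (PiLp.norm_apply_le (f p) j).trans (hM p hp)
  exact hslnc.seqLocNonConstFix fun p hp hφp =>
    tendsto_max_zero_of_tendsto_dist_self hφ (fun k => hfM _ (hp k))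
      (fun k => hwalras _ (hp k)) hφp
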